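/- Under renormalization F ∘ Ψ_{λt} = Ψ_t ∘ F, for all n ∈ ℕ, x ∈ M and continuous h: ∫ χ(λ^{-n} t) h(Ψ_t(x)) dt = ∫ χ(s) h(Ψ_s(x)) ds + ∑_{k=0}^{n-1} ∫ φ(t) (F̂ᵏ h)(Ψ_t(Fᵏ x)) dt, where φ(t) = χ(t/λ) − χ(t) and F̂ h = λ h ∘ F^{-1}. -/
import Mathlib


open MeasureTheory

/-- under the renormalization `F ∘ Ψ_{λt} = Ψ_t ∘ F`, for all `n`, `x` and
continuous `h`:
`∫ χ(λ^{-n} t) h(Ψ_t x) dt = ∫ χ(s) h(Ψ_s x) ds + ∑_{k<n} ∫ φ(t) (F̂ᵏ h)(Ψ_t (Fᵏ x)) dt`,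
where `φ(t) = χ(t/λ) − χ(t)` and `F̂ h = λ h ∘ F⁻¹`, all integrals over `[0,∞)`. -/
theorem stmt9
    {M : Type*} [TopologicalSpace M] (Ψ : ℝ → M → M)
    (hΨ0 : ∀ x, Ψ 0 x = x)
    (hΨadd : ∀ s t x, Ψ (s + t) x = Ψ s (Ψ t x))
    (hΨcont : Continuous fun p : ℝ × M => Ψ p.1 p.2)
    (F : M ≃ M) (lam : ℝ) (hlam : 1 < lam)
    (hren : ∀ t x, F (Ψ (lam * t) x) = Ψ t (F x))
    (h : M → ℝ) (hcont : Continuous h)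
    (χ : ℝ → ℝ) (hχsmooth : ContDiff ℝ (⊤ : ℕ∞) χ)
    (hχ1 : ∀ s ∈ Set.Icc (0:ℝ) (1/2), χ s = 1)
    (hχ0 : ∀ s ≥ (1:ℝ), χ s = 0)
    (φ : ℝ → ℝ) (hφ : ∀ t, φ t = χ (t / lam) - χ t) :
    ∀ (n : ℕ) (x : M),
      ∫ t in Set.Ioi (0:ℝ), χ (t / lam ^ n) * h (Ψ t x)
        = (∫ s in Set.Ioi (0:ℝ), χ s * h (Ψ s x))
          + ∑ k ∈ Finset.range n,
              ∫ t in Set.Ioi (0:ℝ),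
                φ t * (lam ^ k * h ((⇑F.symm)^[k] (Ψ t ((⇑F)^[k] x)))) := by
  have hlam0 : (0:ℝ) < lam := lt_trans one_pos hlam
  have hpow : ∀ n : ℕ, (0:ℝ) < lam ^ n := fun n => pow_pos hlam0 n
  -- iterated renormalization
  have hrenk : ∀ (k : ℕ) (s : ℝ) (x : M),
      (⇑F)^[k] (Ψ (lam ^ k * s) x) = Ψ s ((⇑F)^[k] x) := by
    intro k
    induction k with
    | zero => intro s x; simp
    | succ k ih =>
      intro s x
      have h1 : lam ^ (k + 1) * s = lam * (lam ^ k * s) := by ring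
      rw [Function.iterate_succ_apply, Function.iterate_succ_apply, h1, hren, ih]
  have hLI : Function.LeftInverse (⇑F.symm) (⇑F) := F.left_inv
  have hsymmk : ∀ (k : ℕ) (s : ℝ) (x : M),
      (⇑F.symm)^[k] (Ψ s ((⇑F)^[k] x)) = Ψ (lam ^ k * s) x := by
    intro k s x
    rw [← hrenk k s x, (hLI.iterate k) _]
  -- continuity / integrability
  have hcontΨ : ∀ x : M, Continuous fun t : ℝ => h (Ψ t x) := by
    intro x
    exact hcont.comp (hΨcont.comp (continuous_id.prodMk continuous_const))
  have hint : ∀ (c : ℝ), 0 < c → ∀ x : M,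
      IntegrableOn (fun t => χ (t / c) * h (Ψ t x)) (Set.Ioi 0) := by
    intro c hc x
    have hcontf : Continuous fun t => χ (t / c) * h (Ψ t x) :=
      ((hχsmooth.continuous).comp (continuous_id.div_const c)).mul (hcontΨ x)
    have h1 : IntegrableOn (fun t => χ (t / c) * h (Ψ t x)) (Set.Ioc 0 c) :=
      hcontf.integrableOn_Ioc
    have h2 : IntegrableOn (fun t => χ (t / c) * h (Ψ t x)) (Set.Ioi c) := by
      refine IntegrableOn.congr_fun (integrableOn_zero) ?_ measurableSet_Ioi
      intro t ht
      have hz : χ (t / c) = 0 := hχ0 _ ((one_le_div hc).2 (le_of_lt ht))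
      simp [hz]
    have := h1.union h2
    rwa [Set.Ioc_union_Ioi_eq_Ioi hc.le] at this
  -- main induction
  intro n x
  induction n with
  | zero => simp
  | succ n ih =>
    have key :
        (∫ t in Set.Ioi (0:ℝ), χ (t / lam ^ (n+1)) * h (Ψ t x))
          - ∫ t in Set.Ioi (0:ℝ), χ (t / lam ^ n) * h (Ψ t x)
        = ∫ t in Set.Ioi (0:ℝ),
            φ t * (lam ^ n * h ((⇑F.symm)^[n] (Ψ t ((⇑F)^[n] x)))) := by
      rw [← integral_sub (hint _ (hpow (n+1)) x) (hint _ (hpow n) x)]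
      have heq : ∀ t : ℝ,
          χ (t / lam ^ (n+1)) * h (Ψ t x) - χ (t / lam ^ n) * h (Ψ t x)
            = (fun s => φ s * h (Ψ (lam ^ n * s) x)) (t * (lam ^ n)⁻¹) := by
        intro t
        simp only
        have h1 : t * (lam ^ n)⁻¹ = t / lam ^ n := by ring
        have h2 : t / lam ^ n / lam = t / lam ^ (n+1) := by
          rw [div_div, ← pow_succ]
        have h3 : lam ^ n * (t / lam ^ n) = t := by
          field_simp
        rw [h1, hφ, h2, h3, sub_mul]
      rw [integral_congr_ae (Filter.Eventually.of_forall heq)]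
      rw [integral_comp_mul_right_Ioi (fun s => φ s * h (Ψ (lam ^ n * s) x)) 0
        (inv_pos.2 (hpow n))]
      rw [inv_inv, zero_mul]
      rw [← integral_smul]
      congr 1
      ext s
      have := hsymmk n s x
      rw [this]
      simp [smul_eq_mul]
      ring
    have : (∫ t in Set.Ioi (0:ℝ), χ (t / lam ^ (n+1)) * h (Ψ t x))
        = (∫ t in Set.Ioi (0:ℝ), χ (t / lam ^ n) * h (Ψ t x))
          + ∫ t in Set.Ioi (0:ℝ),
              φ t * (lam ^ n * h ((⇑F.symm)^[n] (Ψ t ((⇑F)^[n] x)))) := by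
      linarith [key]
    rw [this, ih, Finset.sum_range_succ]
    ring
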